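/- arXiv:2305.10806 — 7 statements merged into one kernel-verified Lean document; each statement's English description precedes it below -/
import Mathlib

section
/- Let H(s) = C(s) K(s)^{-1} B(s) be the transfer function of a structured system with K(σ) invertible, and let the reduced model be obtained by projection: Ĥ(s) = C(s) V (W^H K(s) V)^{-1} W^H B(s) with W^H K(σ) V invertible. If the column span of K(σ)^{-1} B(σ) is contained in the column span of V, then H(σ) = Ĥ(σ). -/
open Matrix

/-- Structured interpolation (Beattie–Gugercin), one-sided `V` condition:
if `span(K(σ)⁻¹ B(σ)) ⊆ span(V)`, then the projected reduced transfer function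
matches the full one at `σ`. -/
theorem structured_interpolation_V
    {n m p r : ℕ}
    (K : ℂ → Matrix (Fin n) (Fin n) ℂ)
    (B : ℂ → Matrix (Fin n) (Fin m) ℂ)
    (C : ℂ → Matrix (Fin p) (Fin n) ℂ)
    (σ : ℂ)
    (V W : Matrix (Fin n) (Fin r) ℂ)
    (hK : IsUnit (K σ))
    (hKr : IsUnit (Wᴴ * K σ * V))
    (hspan : ∃ X : Matrix (Fin r) (Fin m) ℂ, (K σ)⁻¹ * B σ = V * X) :
    C σ * (K σ)⁻¹ * B σ = C σ * V * (Wᴴ * K σ * V)⁻¹ * Wᴴ * B σ := by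
  obtain ⟨X, hX⟩ := hspan
  have hKK : K σ * (K σ)⁻¹ = 1 := mul_nonsing_inv _ (isUnit_iff_isUnit_det _ |>.mp hK)
  have hB : B σ = K σ * V * X := by
    calc B σ = K σ * (K σ)⁻¹ * B σ := by rw [hKK, Matrix.one_mul]
      _ = K σ * ((K σ)⁻¹ * B σ) := by rw [Matrix.mul_assoc]
      _ = K σ * V * X := by rw [hX, Matrix.mul_assoc]
  have hinv : (Wᴴ * K σ * V)⁻¹ * (Wᴴ * K σ * V) = 1 :=
    nonsing_inv_mul _ (isUnit_iff_isUnit_det _ |>.mp hKr)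
  calc C σ * (K σ)⁻¹ * B σ = C σ * ((K σ)⁻¹ * B σ) := by rw [Matrix.mul_assoc]
    _ = C σ * (V * X) := by rw [hX]
    _ = C σ * V * X := by rw [Matrix.mul_assoc]
    _ = C σ * V * ((Wᴴ * K σ * V)⁻¹ * (Wᴴ * K σ * V) * X) := by rw [hinv, Matrix.one_mul]
    _ = C σ * V * (Wᴴ * K σ * V)⁻¹ * Wᴴ * B σ := by rw [hB]; simp only [Matrix.mul_assoc]
end

section
/- Under the same projection setup, if the column span of K(σ)^{-H} C(σ)^H is contained in the column span of W, then H(σ) = Ĥ(σ), where Ĥ(s) = C(s) V (W^H K(s) V)^{-1} W^H B(s). -/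
open Matrix

/-- Structured interpolation, one-sided `W` condition:
if `span(K(σ)⁻ᴴ C(σ)ᴴ) ⊆ span(W)`, then the projected reduced transfer function
matches the full one at `σ`. -/
theorem structured_interpolation_W
    {n m p r : ℕ}
    (K : ℂ → Matrix (Fin n) (Fin n) ℂ)
    (B : ℂ → Matrix (Fin n) (Fin m) ℂ)
    (C : ℂ → Matrix (Fin p) (Fin n) ℂ)
    (σ : ℂ)
    (V W : Matrix (Fin n) (Fin r) ℂ)
    (hK : IsUnit (K σ))
    (hKr : IsUnit (Wᴴ * K σ * V))
    (hspan : ∃ X : Matrix (Fin r) (Fin p) ℂ, ((K σ)ᴴ)⁻¹ * (C σ)ᴴ = W * X) :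
    C σ * (K σ)⁻¹ * B σ = C σ * V * (Wᴴ * K σ * V)⁻¹ * Wᴴ * B σ := by
  obtain ⟨X, hX⟩ := hspan
  have hKd : IsUnit (K σ).det := (Matrix.isUnit_iff_isUnit_det _).1 hK
  have hKrd : IsUnit (Wᴴ * K σ * V).det := (Matrix.isUnit_iff_isUnit_det _).1 hKr
  have h1 : C σ * (K σ)⁻¹ = Xᴴ * Wᴴ := by
    have := congrArg Matrix.conjTranspose hX
    simpa [Matrix.conjTranspose_mul, Matrix.conjTranspose_nonsing_inv] using this
  have h2 : C σ = Xᴴ * Wᴴ * K σ := by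
    calc C σ = C σ * (K σ)⁻¹ * K σ := by
          rw [Matrix.mul_assoc, Matrix.nonsing_inv_mul _ hKd, Matrix.mul_one]
      _ = Xᴴ * Wᴴ * K σ := by rw [h1]
  have h3 : C σ * V * (Wᴴ * K σ * V)⁻¹ = Xᴴ := by
    rw [h2]
    rw [show Xᴴ * Wᴴ * K σ * V * (Wᴴ * K σ * V)⁻¹
        = Xᴴ * ((Wᴴ * K σ * V) * (Wᴴ * K σ * V)⁻¹) by
      simp [Matrix.mul_assoc]]
    rw [Matrix.mul_nonsing_inv _ hKrd, Matrix.mul_one]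
  rw [h1, h3]
end

section
/- Under the same projection setup, if both span(K(σ)^{-1} B(σ)) ⊆ span(V) and span(K(σ)^{-H} C(σ)^H) ⊆ span(W) hold, and K, B, C are differentiable at σ, then in addition to H(σ) = Ĥ(σ), the derivatives match: H'(σ) = Ĥ'(σ). -/
/-!
Write `P(s) = V (Wᴴ K(s) V)⁻¹ Wᴴ`, so that `Ĥ = C P B`. Since `P K P = P`, wherever `K(s)` is
invertible the error factors as
`H - Ĥ = C (K⁻¹ - P) B = (C (K⁻¹ - P)) · K · ((K⁻¹ - P) B)`.
The condition on `V` makes the right factor vanish at `σ`, the condition on `W` the left one, so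
the error vanishes to second order at `σ`.
-/

open Matrix Filter Topology

section Algebra

variable {R : Type*} [CommRing R] {l m n r : Type*} [Fintype n] [Fintype r] [DecidableEq r]

theorem Matrix.nonsing_inv_mul_self_mul_nonsing_inv (A : Matrix r r R) :
    A⁻¹ * A * A⁻¹ = A⁻¹ := by
  by_cases h : IsUnit A.det
  · rw [nonsing_inv_mul _ h, Matrix.one_mul]
  · rw [nonsing_inv_apply_not_isUnit _ h, Matrix.zero_mul, Matrix.zero_mul]

/-- Petrov–Galerkin approximation of `K⁻¹` with trial basis `V` and test matrix `L` (`L = Wᴴ` for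
the reduced model). -/
noncomputable def Matrix.petrovGalerkinInv (V : Matrix n r R) (L : Matrix r n R)
    (K : Matrix n n R) : Matrix n n R :=
  V * (L * K * V)⁻¹ * L

theorem Matrix.petrovGalerkinInv_mul_self_mul (V : Matrix n r R) (L : Matrix r n R)
    (K : Matrix n n R) :
    petrovGalerkinInv V L K * K * petrovGalerkinInv V L K = petrovGalerkinInv V L K :=
  calc V * (L * K * V)⁻¹ * L * K * (V * (L * K * V)⁻¹ * L)
      = V * ((L * K * V)⁻¹ * (L * K * V) * (L * K * V)⁻¹) * L := by
        simp only [Matrix.mul_assoc]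
    _ = V * (L * K * V)⁻¹ * L := by
        rw [nonsing_inv_mul_self_mul_nonsing_inv, Matrix.mul_assoc]

theorem Matrix.conjTranspose_petrovGalerkinInv [StarRing R] (V : Matrix n r R)
    (L : Matrix r n R) (K : Matrix n n R) :
    (petrovGalerkinInv V L K)ᴴ = petrovGalerkinInv Lᴴ Vᴴ Kᴴ := by
  simp only [petrovGalerkinInv, conjTranspose_mul, conjTranspose_nonsing_inv, Matrix.mul_assoc]

variable [DecidableEq n]

theorem Matrix.inv_sub_petrovGalerkinInv_eq {K : Matrix n n R} (hK : IsUnit K)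
    (V : Matrix n r R) (L : Matrix r n R) :
    K⁻¹ - petrovGalerkinInv V L K =
      (K⁻¹ - petrovGalerkinInv V L K) * K * (K⁻¹ - petrovGalerkinInv V L K) := by
  have hK' := (isUnit_iff_isUnit_det K).mp hK
  simp only [Matrix.sub_mul, Matrix.mul_sub, nonsing_inv_mul _ hK', Matrix.one_mul,
    mul_nonsing_inv_cancel_right _ _ hK', petrovGalerkinInv_mul_self_mul]
  abel

theorem Matrix.mul_inv_mul_sub_mul_petrovGalerkinInv_mul {K : Matrix n n R} (hK : IsUnit K)
    (V : Matrix n r R) (L : Matrix r n R) (C : Matrix l n R) (B : Matrix n m R) :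
    C * K⁻¹ * B - C * petrovGalerkinInv V L K * B =
      C * (K⁻¹ - petrovGalerkinInv V L K) * (K * ((K⁻¹ - petrovGalerkinInv V L K) * B)) := by
  set E := K⁻¹ - petrovGalerkinInv V L K
  calc C * K⁻¹ * B - C * petrovGalerkinInv V L K * B = C * E * B := by
        rw [Matrix.mul_sub, Matrix.sub_mul]
    _ = C * (E * K * E) * B := by rw [← inv_sub_petrovGalerkinInv_eq hK]
    _ = C * E * (K * (E * B)) := by simp only [Matrix.mul_assoc]

theorem Matrix.petrovGalerkinInv_mul_eq_inv_mul {K : Matrix n n R} {V : Matrix n r R}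
    {L : Matrix r n R} {B : Matrix n m R} (hK : IsUnit K) (hKr : IsUnit (L * K * V))
    {X : Matrix r m R} (hX : K⁻¹ * B = V * X) :
    petrovGalerkinInv V L K * B = K⁻¹ * B := by
  have hLB : L * B = L * K * V * X := by
    rw [Matrix.mul_assoc (L * K), ← hX, Matrix.mul_assoc,
      mul_nonsing_inv_cancel_left _ _ ((isUnit_iff_isUnit_det K).mp hK)]
  rw [hX, petrovGalerkinInv, Matrix.mul_assoc, hLB, Matrix.mul_assoc,
    nonsing_inv_mul_cancel_left _ _ ((isUnit_iff_isUnit_det _).mp hKr)]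

-- The left condition is the right one for the conjugate-transposed system.
theorem Matrix.mul_petrovGalerkinInv_eq_mul_inv [StarRing R] {K : Matrix n n R}
    {V W : Matrix n r R} {C : Matrix l n R} (hK : IsUnit K) (hKr : IsUnit (Wᴴ * K * V))
    {Y : Matrix r l R} (hY : (Kᴴ)⁻¹ * Cᴴ = W * Y) :
    C * petrovGalerkinInv V Wᴴ K = C * K⁻¹ := by
  have hKr' : IsUnit (Vᴴ * Kᴴ * W) := by
    simpa only [conjTranspose_mul, conjTranspose_conjTranspose, Matrix.mul_assoc] using
      (isUnit_conjTranspose _).mpr hKr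
  have := congrArg conjTranspose
    (petrovGalerkinInv_mul_eq_inv_mul (L := Vᴴ) ((isUnit_conjTranspose _).mpr hK) hKr' hY)
  simpa only [conjTranspose_mul, conjTranspose_petrovGalerkinInv, conjTranspose_conjTranspose,
    conjTranspose_nonsing_inv] using this

end Algebra

section LinftyOp

variable {𝕜 : Type*} [NontriviallyNormedField 𝕜] [CompleteSpace 𝕜] {n : Type*} [Fintype n]
  [DecidableEq n]

attribute [local instance] Matrix.linftyOpNormedRing Matrix.linftyOpNormedAlgebra

-- The operator norm induces the product uniformity, so completeness of `𝕜` transfers.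
theorem Matrix.completeSpace_linftyOp :
    @CompleteSpace (Matrix n n 𝕜) Matrix.linftyOpNormedRing.toUniformSpace :=
  inferInstanceAs (CompleteSpace (Matrix n n 𝕜))

attribute [local instance] Matrix.completeSpace_linftyOp

theorem Matrix.isOpen_setOf_isUnit : IsOpen {A : Matrix n n 𝕜 | IsUnit A} :=
  Units.isOpen

theorem DifferentiableAt.matrix_inv {F : 𝕜 → Matrix n n 𝕜} {x : 𝕜}
    (hF : DifferentiableAt 𝕜 F x) (hx : IsUnit (F x)) :
    DifferentiableAt 𝕜 (fun y => (F y)⁻¹) x := by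
  simp only [nonsing_inv_eq_ringInverse]
  exact hF.inverse hx

end LinftyOp

attribute [local instance] Matrix.normedAddCommGroup Matrix.normedSpace

section Calculus

variable {𝕜 : Type*} [NontriviallyNormedField 𝕜] {l m n : Type*} [Fintype m] [Fintype n]

theorem Matrix.hasDerivAt_iff {F : 𝕜 → Matrix l n 𝕜} {F' : Matrix l n 𝕜} {x : 𝕜} :
    HasDerivAt F F' x ↔ ∀ i j, HasDerivAt (fun y => F y i j) (F' i j) x :=
  hasDerivAt_pi.trans (forall_congr' fun _ => hasDerivAt_pi)

theorem Matrix.differentiableAt_iff {F : 𝕜 → Matrix l n 𝕜} {x : 𝕜} :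
    DifferentiableAt 𝕜 F x ↔ ∀ i j, DifferentiableAt 𝕜 (fun y => F y i j) x :=
  differentiableAt_pi.trans (forall_congr' fun _ => differentiableAt_pi)

theorem HasDerivAt.matrix_mul {F : 𝕜 → Matrix l m 𝕜} {G : 𝕜 → Matrix m n 𝕜}
    {F' : Matrix l m 𝕜} {G' : Matrix m n 𝕜} {x : 𝕜} (hF : HasDerivAt F F' x)
    (hG : HasDerivAt G G' x) :
    HasDerivAt (fun y => F y * G y) (F' * G x + F x * G') x := by
  rw [Matrix.hasDerivAt_iff] at hF hG ⊢
  intro i j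
  rw [Matrix.add_apply, mul_apply, mul_apply, ← Finset.sum_add_distrib]
  exact HasDerivAt.fun_sum fun k _ => (hF i k).mul (hG k j)

theorem DifferentiableAt.matrix_mul {F : 𝕜 → Matrix l m 𝕜} {G : 𝕜 → Matrix m n 𝕜} {x : 𝕜}
    (hF : DifferentiableAt 𝕜 F x) (hG : DifferentiableAt 𝕜 G x) :
    DifferentiableAt 𝕜 (fun y => F y * G y) x := by
  rw [Matrix.differentiableAt_iff] at hF hG ⊢
  intro i j
  simp only [mul_apply]
  exact DifferentiableAt.fun_sum fun k _ => (hF i k).mul (hG k j)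

theorem hasDerivAt_matrix_mul_of_eq_zero [Fintype l] {F : 𝕜 → Matrix l m 𝕜}
    {G : 𝕜 → Matrix m n 𝕜} {x : 𝕜} (hF : DifferentiableAt 𝕜 F x)
    (hG : DifferentiableAt 𝕜 G x) (hF₀ : F x = 0) (hG₀ : G x = 0) :
    HasDerivAt (fun y => F y * G y) 0 x := by
  simpa [hF₀, hG₀] using hF.hasDerivAt.matrix_mul hG.hasDerivAt

theorem Matrix.deriv_apply_eq_of_hasDerivAt_sub [Fintype l] {F G : 𝕜 → Matrix l n 𝕜} {x : 𝕜}
    (hG : DifferentiableAt 𝕜 G x) (h : HasDerivAt (fun y => F y - G y) 0 x) (i : l) (j : n) :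
    deriv (fun y => F y i j) x = deriv (fun y => G y i j) x := by
  have hF : HasDerivAt F (deriv G x) x := by
    have hsum := h.fun_add hG.hasDerivAt
    simp only [sub_add_cancel, zero_add] at hsum
    exact hsum
  exact (hasDerivAt_iff.mp hF i j).deriv.trans (hasDerivAt_iff.mp hG.hasDerivAt i j).deriv.symm

theorem DifferentiableAt.petrovGalerkinInv [CompleteSpace 𝕜] {r : Type*} [Fintype r]
    [DecidableEq r] {K : 𝕜 → Matrix n n 𝕜} {x : 𝕜} (hK : DifferentiableAt 𝕜 K x)
    (V : Matrix n r 𝕜) (L : Matrix r n 𝕜) (hKr : IsUnit (L * K x * V)) :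
    DifferentiableAt 𝕜 (fun y => petrovGalerkinInv V L (K y)) x :=
  ((differentiableAt_const V).matrix_mul
    (((differentiableAt_const L).matrix_mul hK).matrix_mul (differentiableAt_const V)
      |>.matrix_inv hKr)).matrix_mul (differentiableAt_const L)

end Calculus

/-- Structured Hermite interpolation: under both one-sided subspace conditions and
differentiability of `K`, `B`, `C` at `σ`, the full and reduced transfer functions
match at `σ` together with their (entrywise complex) derivatives. -/
theorem structured_interpolation_hermite
    {n m p r : ℕ}
    (K : ℂ → Matrix (Fin n) (Fin n) ℂ)
    (B : ℂ → Matrix (Fin n) (Fin m) ℂ)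
    (C : ℂ → Matrix (Fin p) (Fin n) ℂ)
    (σ : ℂ)
    (V W : Matrix (Fin n) (Fin r) ℂ)
    (hK : IsUnit (K σ))
    (hKr : IsUnit (Wᴴ * K σ * V))
    (hKd : ∀ i j, DifferentiableAt ℂ (fun s => K s i j) σ)
    (hBd : ∀ i j, DifferentiableAt ℂ (fun s => B s i j) σ)
    (hCd : ∀ i j, DifferentiableAt ℂ (fun s => C s i j) σ)
    (hspanV : ∃ X : Matrix (Fin r) (Fin m) ℂ, (K σ)⁻¹ * B σ = V * X)
    (hspanW : ∃ Y : Matrix (Fin r) (Fin p) ℂ, ((K σ)ᴴ)⁻¹ * (C σ)ᴴ = W * Y) :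
    (C σ * (K σ)⁻¹ * B σ = C σ * V * (Wᴴ * K σ * V)⁻¹ * Wᴴ * B σ) ∧
      (∀ i j,
        deriv (fun s => (C s * (K s)⁻¹ * B s) i j) σ =
          deriv (fun s => (C s * V * (Wᴴ * K s * V)⁻¹ * Wᴴ * B s) i j) σ) := by
  obtain ⟨X, hX⟩ := hspanV
  obtain ⟨Y, hY⟩ := hspanW
  set P : ℂ → Matrix (Fin n) (Fin n) ℂ := fun s => petrovGalerkinInv V Wᴴ (K s)
  have hĤ : ∀ s, C s * V * (Wᴴ * K s * V)⁻¹ * Wᴴ * B s = C s * P s * B s := fun s => by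
    simp only [P, petrovGalerkinInv, Matrix.mul_assoc]
  have hright : P σ * B σ = (K σ)⁻¹ * B σ := petrovGalerkinInv_mul_eq_inv_mul hK hKr hX
  have hleft : C σ * P σ = C σ * (K σ)⁻¹ := mul_petrovGalerkinInv_eq_mul_inv hK hKr hY
  refine ⟨by rw [hĤ, Matrix.mul_assoc (C σ) (P σ), hright, Matrix.mul_assoc], fun i j => ?_⟩
  have hKd' := Matrix.differentiableAt_iff.mpr hKd
  have hBd' := Matrix.differentiableAt_iff.mpr hBd
  have hCd' := Matrix.differentiableAt_iff.mpr hCd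
  have hPd : DifferentiableAt ℂ P σ := hKd'.petrovGalerkinInv V Wᴴ hKr
  have hEd : DifferentiableAt ℂ (fun s => (K s)⁻¹ - P s) σ := (hKd'.matrix_inv hK).sub hPd
  have hfactor : ∀ᶠ s in 𝓝 σ, C s * (K s)⁻¹ * B s - C s * P s * B s =
      C s * ((K s)⁻¹ - P s) * (K s * (((K s)⁻¹ - P s) * B s)) :=
    (hKd'.continuousAt.eventually (isOpen_setOf_isUnit.mem_nhds hK)).mono fun s hs =>
      mul_inv_mul_sub_mul_petrovGalerkinInv_mul hs V Wᴴ (C s) (B s)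
  have herr : HasDerivAt (fun s => C s * (K s)⁻¹ * B s - C s * P s * B s) 0 σ :=
    (hasDerivAt_matrix_mul_of_eq_zero (hCd'.matrix_mul hEd)
      (hKd'.matrix_mul (hEd.matrix_mul hBd')) (by rw [Matrix.mul_sub, hleft, sub_self])
      (by rw [Matrix.sub_mul, hright, sub_self, Matrix.mul_zero])).congr_of_eventuallyEq hfactor
  simp only [hĤ]
  exact deriv_apply_eq_of_hasDerivAt_sub ((hCd'.matrix_mul hPd).matrix_mul hBd') herr i j
end

section
/- For the tangential rational interpolation problem in the one-sided case: if V ∈ ℂ^{n×r} has columns vⱼ = K(σⱼ)^{-1} B(σⱼ) bⱼ for distinct points σ₁,…,σᵣ with tangential directions bⱼ ∈ ℂ^m, and W ∈ ℂ^{n×r} is arbitrary with W^H K(σⱼ) V invertible, then the projected transfer function satisfies the tangential interpolation conditions Ĥ(σⱼ) bⱼ = H(σⱼ) bⱼ for all j = 1,…,r. -/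
open Matrix

/-- One-sided tangential rational interpolation: if the `j`-th column of `V` is
`K(σⱼ)⁻¹ B(σⱼ) bⱼ` for distinct points `σⱼ` and directions `bⱼ`, then for any `W`
making the reduced pencil invertible, the projected transfer function satisfies
`Ĥ(σⱼ) bⱼ = H(σⱼ) bⱼ` for all `j`. -/
theorem tangential_interpolation_one_sided
    {n m p r : ℕ}
    (K : ℂ → Matrix (Fin n) (Fin n) ℂ)
    (B : ℂ → Matrix (Fin n) (Fin m) ℂ)
    (C : ℂ → Matrix (Fin p) (Fin n) ℂ)
    (σ : Fin r → ℂ) (hσ : Function.Injective σ)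
    (b : Fin r → Fin m → ℂ)
    (V W : Matrix (Fin n) (Fin r) ℂ)
    (hV : ∀ (i : Fin n) (j : Fin r), V i j = ((K (σ j))⁻¹ *ᵥ (B (σ j) *ᵥ b j)) i)
    (hVrank : V.rank = r)
    (hK : ∀ j, IsUnit (K (σ j)))
    (hKr : ∀ j, IsUnit (Wᴴ * K (σ j) * V)) :
    ∀ j, (C (σ j) * V * (Wᴴ * K (σ j) * V)⁻¹ * Wᴴ * B (σ j)) *ᵥ b j =
      (C (σ j) * (K (σ j))⁻¹ * B (σ j)) *ᵥ b j := by
  intro j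
  set s := σ j
  have hcol : V *ᵥ Pi.single j 1 = (K s)⁻¹ *ᵥ (B s *ᵥ b j) := by
    funext i
    rw [mulVec_single]
    simpa using hV i j
  have hKV : (Wᴴ * K s * V) *ᵥ Pi.single j 1 = Wᴴ *ᵥ (B s *ᵥ b j) := by
    rw [← mulVec_mulVec, hcol, mulVec_mulVec, Matrix.mul_assoc,
      Matrix.mul_nonsing_inv _ ((Matrix.isUnit_iff_isUnit_det _).mp (hK j)),
      Matrix.mul_one]
  have hinv : (Wᴴ * K s * V)⁻¹ *ᵥ (Wᴴ *ᵥ (B s *ᵥ b j)) = Pi.single j 1 := by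
    rw [← hKV, mulVec_mulVec,
      Matrix.nonsing_inv_mul _ ((Matrix.isUnit_iff_isUnit_det _).mp (hKr j)),
      one_mulVec]
  calc (C s * V * (Wᴴ * K s * V)⁻¹ * Wᴴ * B s) *ᵥ b j
      = C s *ᵥ (V *ᵥ ((Wᴴ * K s * V)⁻¹ *ᵥ (Wᴴ *ᵥ (B s *ᵥ b j)))) := by
        simp only [mulVec_mulVec, Matrix.mul_assoc]
    _ = C s *ᵥ ((K s)⁻¹ *ᵥ (B s *ᵥ b j)) := by rw [hinv, hcol]
    _ = (C s * (K s)⁻¹ * B s) *ᵥ b j := by simp only [mulVec_mulVec, Matrix.mul_assoc]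
end

section
/- If the Loewner pencil (𝕃_σ, 𝕃) is such that 𝕃_σ − κⱼ 𝕃 is invertible, then the Loewner transfer function H_𝕃(s) = W_L (𝕃_σ − s 𝕃)^{-1} V_L satisfies the right tangential interpolation condition H_𝕃(κⱼ) rⱼ = wⱼ. -/
open Matrix

/-- Right tangential interpolation by the Loewner realization: if `𝕃_σ − κⱼ 𝕃`
is invertible, then `H_𝕃(κⱼ) rⱼ = wⱼ` where `H_𝕃(s) = W_L (𝕃_σ − s 𝕃)⁻¹ V_L`. -/
theorem loewner_right_interpolation
    {m p q : ℕ}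
    (H : ℂ → Matrix (Fin p) (Fin m) ℂ)
    (κ μ : Fin q → ℂ)
    (hκ : Function.Injective κ) (hμ : Function.Injective μ)
    (hdisj : ∀ i j, μ i ≠ κ j)
    (rdir : Fin q → Fin m → ℂ) (ℓ : Fin q → Fin p → ℂ)
    (w : Fin q → Fin p → ℂ) (v : Fin q → Fin m → ℂ)
    (hw : ∀ j, w j = H (κ j) *ᵥ rdir j)
    (hv : ∀ i, v i = star (ℓ i) ᵥ* H (μ i))
    (𝕃 𝕃σ : Matrix (Fin q) (Fin q) ℂ)
    (h𝕃 : ∀ i j, 𝕃 i j = (v i ⬝ᵥ rdir j - star (ℓ i) ⬝ᵥ w j) / (μ i - κ j))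
    (h𝕃σ : ∀ i j,
      𝕃σ i j = (μ i * (v i ⬝ᵥ rdir j) - κ j * (star (ℓ i) ⬝ᵥ w j)) / (μ i - κ j))
    (j : Fin q)
    (hreg : IsUnit (𝕃σ - κ j • 𝕃)) :
    ((Matrix.of fun a k => w k a) * (𝕃σ - κ j • 𝕃)⁻¹ *
        (Matrix.of fun k b => v k b)) *ᵥ rdir j = w j := by
  set A := 𝕃σ - κ j • 𝕃 with hA
  have hdet : IsUnit A.det := (Matrix.isUnit_iff_isUnit_det A).mp hreg
  have hcol : A *ᵥ Pi.single j 1 = (Matrix.of fun k b => v k b) *ᵥ rdir j := by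
    funext i
    have hne : μ i - κ j ≠ 0 := sub_ne_zero.mpr (hdisj i j)
    have hAij : A i j = v i ⬝ᵥ rdir j := by
      rw [hA]
      simp only [Matrix.sub_apply, Matrix.smul_apply, h𝕃, h𝕃σ, smul_eq_mul]
      field_simp
      ring
    simp only [Matrix.mulVec, dotProduct, Matrix.of_apply]
    rw [Finset.sum_eq_single j]
    · simpa [dotProduct] using hAij
    · intro b _ hb; simp [Pi.single_eq_of_ne hb]
    · simp
  have key : A⁻¹ *ᵥ ((Matrix.of fun k b => v k b) *ᵥ rdir j) = Pi.single j 1 := by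
    rw [← hcol, Matrix.mulVec_mulVec, Matrix.nonsing_inv_mul A hdet, Matrix.one_mulVec]
  calc ((Matrix.of fun a k => w k a) * A⁻¹ * (Matrix.of fun k b => v k b)) *ᵥ rdir j
      = (Matrix.of fun a k => w k a) *ᵥ (A⁻¹ *ᵥ ((Matrix.of fun k b => v k b) *ᵥ rdir j)) := by
        simp [← Matrix.mulVec_mulVec]
    _ = (Matrix.of fun a k => w k a) *ᵥ Pi.single j 1 := by rw [key]
    _ = w j := by
        funext a
        simp only [Matrix.mulVec, dotProduct, Matrix.of_apply]
        rw [Finset.sum_eq_single j]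
        · simp
        · intro b _ hb; simp [Pi.single_eq_of_ne hb]
        · simp
end

section
/- If 𝕃_σ − μᵢ 𝕃 is invertible, then the Loewner transfer function H_𝕃(s) = W_L (𝕃_σ − s 𝕃)^{-1} V_L satisfies the left tangential interpolation condition ℓᵢ^H H_𝕃(μᵢ) = vᵢ^H. -/
open Matrix

/-- Left tangential interpolation by the Loewner realization: if `𝕃_σ − μᵢ 𝕃`
is invertible, then `ℓᵢᴴ H_𝕃(μᵢ) = vᵢᴴ` where `H_𝕃(s) = W_L (𝕃_σ − s 𝕃)⁻¹ V_L`. -/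
theorem loewner_left_interpolation
    {m p q : ℕ}
    (H : ℂ → Matrix (Fin p) (Fin m) ℂ)
    (κ μ : Fin q → ℂ)
    (hκ : Function.Injective κ) (hμ : Function.Injective μ)
    (hdisj : ∀ i j, μ i ≠ κ j)
    (rdir : Fin q → Fin m → ℂ) (ℓ : Fin q → Fin p → ℂ)
    (w : Fin q → Fin p → ℂ) (v : Fin q → Fin m → ℂ)
    (hw : ∀ j, w j = H (κ j) *ᵥ rdir j)
    (hv : ∀ i, v i = star (ℓ i) ᵥ* H (μ i))
    (𝕃 𝕃σ : Matrix (Fin q) (Fin q) ℂ)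
    (h𝕃 : ∀ i j, 𝕃 i j = (v i ⬝ᵥ rdir j - star (ℓ i) ⬝ᵥ w j) / (μ i - κ j))
    (h𝕃σ : ∀ i j,
      𝕃σ i j = (μ i * (v i ⬝ᵥ rdir j) - κ j * (star (ℓ i) ⬝ᵥ w j)) / (μ i - κ j))
    (i : Fin q)
    (hreg : IsUnit (𝕃σ - μ i • 𝕃)) :
    star (ℓ i) ᵥ* ((Matrix.of fun a k => w k a) * (𝕃σ - μ i • 𝕃)⁻¹ *
        (Matrix.of fun k b => v k b)) = v i := by

  set M := 𝕃σ - μ i • 𝕃 with hM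
  have hrow : ∀ j, M i j = star (ℓ i) ⬝ᵥ w j := by
    intro j
    have hne : μ i - κ j ≠ 0 := sub_ne_zero.mpr (hdisj i j)
    simp only [hM, Matrix.sub_apply, Matrix.smul_apply, h𝕃, h𝕃σ, smul_eq_mul]
    field_simp
    ring
  have hdet : IsUnit M.det := (Matrix.isUnit_iff_isUnit_det M).mp hreg
  have key : star (ℓ i) ᵥ* (Matrix.of fun a k => w k a) = M i := by
    funext k
    simp [Matrix.vecMul, dotProduct, hrow k]
  have hcancel : M * (M⁻¹ * Matrix.of fun k b => v k b) = Matrix.of fun k b => v k b :=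
    Matrix.mul_nonsing_inv_cancel_left M _ hdet
  calc star (ℓ i) ᵥ* ((Matrix.of fun a k => w k a) * M⁻¹ *
        (Matrix.of fun k b => v k b))
      = (star (ℓ i) ᵥ* (Matrix.of fun a k => w k a)) ᵥ*
          (M⁻¹ * Matrix.of fun k b => v k b) := by
        rw [Matrix.mul_assoc, ← Matrix.vecMul_vecMul]
    _ = M i ᵥ* (M⁻¹ * Matrix.of fun k b => v k b) := by rw [key]
    _ = v i := by
        funext b
        have := congrFun (congrFun hcancel i) b
        simpa [Matrix.mul_apply, Matrix.vecMul, dotProduct] using this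
end

section
/- For a second-order system with transfer function H(s) = (C_p + s C_v)(s²M + sD + K)^{-1}B, the projected reduced model Ĥ(s) = (C_p V + s C_v V)(s² W^H M V + s W^H D V + W^H K V)^{-1} W^H B equals the structured projection formula C(s) V (W^H K(s) V)^{-1} W^H B(s) with K(s) = s²M + sD + K, B(s) = B, C(s) = C_p + sC_v; in particular, if V contains span((σ²M + σD + K)^{-1}B), then H(σ) = Ĥ(σ). -/
open Matrix

lemma proj_eq {n r : ℕ} (A : Matrix (Fin n) (Fin n) ℂ) (V W : Matrix (Fin n) (Fin r) ℂ)
    (s : ℂ) (M D K : Matrix (Fin n) (Fin n) ℂ) (h : A = s ^ 2 • M + s • D + K) :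
    Wᴴ * A * V = s ^ 2 • (Wᴴ * M * V) + s • (Wᴴ * D * V) + Wᴴ * K * V := by
  subst h
  simp [Matrix.mul_add, Matrix.add_mul, Matrix.mul_smul, Matrix.smul_mul]

/-- Second-order systems: the projected reduced transfer function coincides with the
structured projection formula for `K(s) = s²M + sD + K`, `B(s) = B`,
`C(s) = C_p + sC_v`; and if `span((σ²M+σD+K)⁻¹B) ⊆ span(V)`, then `H(σ) = Ĥ(σ)`. -/
theorem second_order_structured_interpolation
    {n m p r : ℕ}
    (M D K : Matrix (Fin n) (Fin n) ℂ)
    (B : Matrix (Fin n) (Fin m) ℂ)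
    (Cp Cv : Matrix (Fin p) (Fin n) ℂ)
    (σ : ℂ)
    (V W : Matrix (Fin n) (Fin r) ℂ)
    (hK : IsUnit (σ ^ 2 • M + σ • D + K))
    (hKr : IsUnit (σ ^ 2 • (Wᴴ * M * V) + σ • (Wᴴ * D * V) + Wᴴ * K * V)) :
    (∀ s : ℂ,
      (Cp * V + s • (Cv * V)) *
          (s ^ 2 • (Wᴴ * M * V) + s • (Wᴴ * D * V) + Wᴴ * K * V)⁻¹ * Wᴴ * B =
        (Cp + s • Cv) * V * (Wᴴ * (s ^ 2 • M + s • D + K) * V)⁻¹ * Wᴴ * B) ∧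
    ((∃ X : Matrix (Fin r) (Fin m) ℂ, (σ ^ 2 • M + σ • D + K)⁻¹ * B = V * X) →
      (Cp + σ • Cv) * (σ ^ 2 • M + σ • D + K)⁻¹ * B =
        (Cp + σ • Cv) * V * (Wᴴ * (σ ^ 2 • M + σ • D + K) * V)⁻¹ * Wᴴ * B) := by
  constructor
  · intro s
    rw [proj_eq _ V W s M D K rfl]
    congr 2
    simp [Matrix.add_mul, Matrix.smul_mul]
  · rintro ⟨X, hX⟩
    set A := σ ^ 2 • M + σ • D + K with hA
    have hKr' : IsUnit (Wᴴ * A * V) := by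
      rw [proj_eq _ V W σ M D K hA]; exact hKr
    have h1 : Wᴴ * B = (Wᴴ * A * V) * X := by
      have : B = A * (V * X) := by
        rw [← hX, ← Matrix.mul_assoc, Matrix.mul_nonsing_inv _ ((Matrix.isUnit_iff_isUnit_det A).mp hK), Matrix.one_mul]
      rw [this]; simp [Matrix.mul_assoc]
    have h2 : (Wᴴ * A * V)⁻¹ * (Wᴴ * B) = X := by
      rw [h1, ← Matrix.mul_assoc,
        Matrix.nonsing_inv_mul _ ((Matrix.isUnit_iff_isUnit_det _).mp hKr'), Matrix.one_mul]
    calc (Cp + σ • Cv) * A⁻¹ * B = (Cp + σ • Cv) * (V * X) := by rw [Matrix.mul_assoc, hX]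
      _ = (Cp + σ • Cv) * V * ((Wᴴ * A * V)⁻¹ * (Wᴴ * B)) := by rw [h2, Matrix.mul_assoc]
      _ = _ := by simp [Matrix.mul_assoc]
end
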